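/- arXiv:2101.10296 — 2 statements merged into one kernel-verified Lean document; each statement's English description precedes it below -/
import Mathlib

section
/- Let n ≥ 1, p ≥ 1, let f : (Fin n → Fin 2) → ℝ, and let G be a group of permutations of Fin n each of which is a symmetry of f. Let 𝒮 be a finite family of subsets of Fin n (the index sets of the Hamiltonian terms) with real weights w : 𝒮 → ℝ such that the weights are constant on G-orbits (w(S) = w(a(S)) whenever a ∈ G and a(S) ∈ 𝒮), and suppose 𝒮 is closed under the action of G. Then for all parameters β, γ : Fin p → ℝ, the QAOA energy ∑_{S ∈ 𝒮} w(S) ⟨β,γ| Z_S |β,γ⟩ equals ∑over G-orbits O of 𝒮 of |O| · w(s_O) · ⟨β,γ| Z_{s_O} |β,γ⟩, where s_O is any chosen representative of the orbit O. -/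
/-!
A symmetry `a` of `f` permutes the qubits, so its permutation matrix commutes with `H(f)` and
conjugates `X_j` into `X_{a j}`, hence commutes with `B`, with every QAOA layer, and fixes `|s⟩`.
The QAOA state is therefore invariant, `ψ (a·x) = ψ x`, and reindexing the diagonal observable
`Z_{a(S)}` along `x ↦ a·x` gives `⟨Z_{a(S)}⟩ = ⟨Z_S⟩`. Each term of the energy is thus constant on
`G`-orbits, and the sum over `𝒮` collapses to orbit sizes times the terms of the representatives.
-/

open scoped Classical
open Matrix

namespace QAOA

/-- Bitstrings on `n` bits: the computational basis index set. -/
abbrev Bit (n : ℕ) := Fin n → Fin 2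

/-- Pauli-Z on qubit `j`: diagonal with entries `(-1)^(x j)`. -/
noncomputable def Zop (n : ℕ) (j : Fin n) : Matrix (Bit n) (Bit n) ℂ :=
  Matrix.diagonal fun x => (-1 : ℂ) ^ (x j : ℕ)

/-- Flip bit `j` of bitstring `x`. -/
def flip {n : ℕ} (x : Bit n) (j : Fin n) : Bit n := Function.update x j (1 - x j)

/-- Pauli-X on qubit `j`. -/
noncomputable def Xop (n : ℕ) (j : Fin n) : Matrix (Bit n) (Bit n) ℂ :=
  Matrix.of fun x y => if y = flip x j then 1 else 0

/-- The Z-product observable `Z_S = ∏_{j ∈ S} Z_j`. -/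
noncomputable def Zprod (n : ℕ) (S : Finset (Fin n)) : Matrix (Bit n) (Bit n) ℂ :=
  (S.toList.map (Zop n)).prod

/-- The mixing Hamiltonian `B = ∑ j, X_j`. -/
noncomputable def mixB (n : ℕ) : Matrix (Bit n) (Bit n) ℂ := ∑ j, Xop n j

/-- The cost Hamiltonian `H(f)`, diagonal with entries `f x`. -/
noncomputable def costH (n : ℕ) (f : Bit n → ℝ) : Matrix (Bit n) (Bit n) ℂ :=
  Matrix.diagonal fun x => (f x : ℂ)

/-- The uniform superposition `|s⟩`, all entries `2^(-n/2)`. -/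
noncomputable def uniform (n : ℕ) : Bit n → ℂ := fun _ => (((2 : ℝ) ^ (-(n : ℝ) / 2) : ℝ) : ℂ)

/-- The depth-`p` QAOA state
`|β,γ⟩ = exp(-i β_p B) exp(-i γ_p H(f)) ⋯ exp(-i β_1 B) exp(-i γ_1 H(f)) |s⟩`. -/
noncomputable def qaoaState (n p : ℕ) (f : Bit n → ℝ) (β γ : Fin p → ℝ) : Bit n → ℂ :=
  ((List.finRange p).map fun k =>
      NormedSpace.exp ((-Complex.I * (β k : ℂ)) • mixB n) *
      NormedSpace.exp ((-Complex.I * (γ k : ℂ)) • costH n f)).reverse.prod *ᵥ uniform n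

/-- The expectation `⟨ψ|M|ψ⟩ = ∑ x, conj (ψ x) * (M ψ) x`. -/
noncomputable def expectation {n : ℕ} (M : Matrix (Bit n) (Bit n) ℂ) (ψ : Bit n → ℂ) : ℂ :=
  ∑ x, star (ψ x) * (M *ᵥ ψ) x

/-- The action of a permutation of qubit indices on bitstrings: `(a·x) j = x (a⁻¹ j)`. -/
def permAct {n : ℕ} (a : Equiv.Perm (Fin n)) (x : Bit n) : Bit n := fun j => x (a⁻¹ j)

/-- The permutation unitary induced by `a`: `A x y = 1` iff `x = a·y`. -/
noncomputable def permMat {n : ℕ} (a : Equiv.Perm (Fin n)) : Matrix (Bit n) (Bit n) ℂ :=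
  Matrix.of fun x y => if x = permAct a y then 1 else 0

section

variable {n : ℕ}

@[simp] lemma permAct_one (x : Bit n) : permAct 1 x = x := rfl

lemma permAct_mul (a b : Equiv.Perm (Fin n)) (x : Bit n) :
    permAct (a * b) x = permAct a (permAct b x) := by
  funext j; simp [permAct, _root_.mul_inv_rev]

lemma permAct_flip (a : Equiv.Perm (Fin n)) (x : Bit n) (j : Fin n) :
    permAct a (flip x j) = flip (permAct a x) (a j) := by
  funext k
  simp only [permAct, flip, Function.update_apply]
  rw [if_congr Equiv.Perm.inv_eq_iff_eq rfl rfl]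
  simp

def permActEquiv (a : Equiv.Perm (Fin n)) : Equiv.Perm (Bit n) :=
  Equiv.arrowCongr a (Equiv.refl (Fin 2))

@[simp] lemma permActEquiv_apply (a : Equiv.Perm (Fin n)) (x : Bit n) :
    permActEquiv a x = permAct a x := rfl

lemma permMat_mulVec (a : Equiv.Perm (Fin n)) (v : Bit n → ℂ) (x : Bit n) :
    (permMat a *ᵥ v) x = v (permAct a⁻¹ x) := by
  have : ∀ y, x = permAct a y ↔ y = permAct a⁻¹ x := fun y => by
    constructor <;> rintro rfl <;> simp [← permAct_mul]
  simp [permMat, mulVec, dotProduct, this]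

lemma Xop_mulVec (j : Fin n) (v : Bit n → ℂ) (x : Bit n) :
    (Xop n j *ᵥ v) x = v (flip x j) := by
  simp [Xop, mulVec, dotProduct]

lemma permMat_commute_Xop (a : Equiv.Perm (Fin n)) (j : Fin n) :
    permMat a * Xop n j = Xop n (a j) * permMat a := by
  refine ext_iff_mulVec.2 fun v => funext fun x => ?_
  simp only [← mulVec_mulVec, permMat_mulVec, Xop_mulVec, permAct_flip]
  simp

lemma permMat_commute_costH (a : Equiv.Perm (Fin n)) {f : Bit n → ℝ}
    (hf : ∀ x, f (permAct a x) = f x) :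
    Commute (permMat a) (costH n f) := by
  refine ext_iff_mulVec.2 fun v => funext fun x => ?_
  simp only [← mulVec_mulVec, permMat_mulVec, costH, mulVec_diagonal]
  rw [← hf (permAct a⁻¹ x), ← permAct_mul]
  simp

lemma permMat_commute_mixB (a : Equiv.Perm (Fin n)) : Commute (permMat a) (mixB n) := by
  simp only [Commute, SemiconjBy, mixB, Finset.mul_sum, Finset.sum_mul, permMat_commute_Xop]
  exact Equiv.sum_comp a (fun j => Xop n j * permMat a)

lemma Zprod_eq_diagonal (S : Finset (Fin n)) :
    Zprod n S = diagonal fun x => ∏ j ∈ S, (-1 : ℂ) ^ (x j : ℕ) := by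
  have : Zop n = diagonalRingHom (Bit n) ℂ ∘ fun j x => (-1 : ℂ) ^ (x j : ℕ) := rfl
  rw [Zprod, this, ← List.map_map, ← map_list_prod, Finset.prod_map_toList,
    diagonalRingHom_apply, Finset.prod_fn]

lemma permMat_mulVec_uniform (a : Equiv.Perm (Fin n)) : permMat a *ᵥ uniform n = uniform n :=
  funext fun x => permMat_mulVec a _ x

lemma mulVec_qaoaState_of_commute {p : ℕ} {f : Bit n → ℝ} (β γ : Fin p → ℝ)
    {U : Matrix (Bit n) (Bit n) ℂ} (hB : Commute U (mixB n)) (hH : Commute U (costH n f))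
    (hs : U *ᵥ uniform n = uniform n) :
    U *ᵥ qaoaState n p f β γ = qaoaState n p f β γ := by
  unfold qaoaState
  rw [mulVec_mulVec, Commute.eq, ← mulVec_mulVec, hs]
  refine Commute.list_prod_right _ _ fun M hM => ?_
  obtain ⟨k, -, rfl⟩ := List.mem_map.1 (List.mem_reverse.1 hM)
  exact (hB.smul_right _).exp_right.mul_right (hH.smul_right _).exp_right

lemma qaoaState_permAct {p : ℕ} {f : Bit n → ℝ} (β γ : Fin p → ℝ) {a : Equiv.Perm (Fin n)}
    (hf : ∀ x, f (permAct a x) = f x) (x : Bit n) :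
    qaoaState n p f β γ (permAct a x) = qaoaState n p f β γ x := by
  have := congrFun (mulVec_qaoaState_of_commute β γ (permMat_commute_mixB a)
    (permMat_commute_costH a hf) (permMat_mulVec_uniform a)) (permAct a x)
  rw [permMat_mulVec, ← permAct_mul, inv_mul_cancel, permAct_one] at this
  exact this.symm

lemma expectation_diagonal_comp {d : Bit n → ℂ} {ψ : Bit n → ℂ} (e : Equiv.Perm (Bit n))
    (hψ : ∀ x, ψ (e x) = ψ x) :
    expectation (diagonal (d ∘ e)) ψ = expectation (diagonal d) ψ := by
  simp only [expectation, mulVec_diagonal]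
  conv_rhs => rw [← Equiv.sum_comp e]
  simp [hψ]

lemma expectation_Zprod_image {ψ : Bit n → ℂ} {a : Equiv.Perm (Fin n)}
    (hψ : ∀ x, ψ (permAct a x) = ψ x) (S : Finset (Fin n)) :
    expectation (Zprod n (S.image a)) ψ = expectation (Zprod n S) ψ := by
  rw [Zprod_eq_diagonal, Zprod_eq_diagonal, ← expectation_diagonal_comp (permActEquiv a) hψ]
  congr 2
  funext x
  simp [Finset.prod_image a.injective.injOn, permAct]

lemma _root_.Finset.sum_eq_sum_card_filter_nsmul {α M : Type*} [AddCommMonoid M]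
    {s R : Finset α} {rel : α → α → Prop} [DecidableRel rel] {g : α → M}
    (hrep : ∀ x ∈ s, ∃! r, r ∈ R ∧ rel x r) (hg : ∀ x ∈ s, ∀ r ∈ R, rel x r → g x = g r) :
    ∑ x ∈ s, g x = ∑ r ∈ R, (s.filter (rel · r)).card • g r := by
  calc ∑ x ∈ s, g x = ∑ x ∈ s, ∑ r ∈ R, if rel x r then g r else 0 := by
        refine Finset.sum_congr rfl fun x hx => ?_
        obtain ⟨r, ⟨hr, hxr⟩, huniq⟩ := hrep x hx
        rw [Finset.sum_eq_single_of_mem r hr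
          fun r' hr' hne => if_neg fun h => hne (huniq r' ⟨hr', h⟩), if_pos hxr, hg x hx r hr hxr]
    _ = ∑ r ∈ R, (s.filter (rel · r)).card • g r := by
        rw [Finset.sum_comm]
        simp [Finset.sum_ite]

end

theorem qaoa_energy_orbit_sum_general (n p : ℕ)
    (f : Bit n → ℝ) (G : Subgroup (Equiv.Perm (Fin n)))
    (hsym : ∀ a ∈ G, ∀ x : Bit n, f (permAct a x) = f x)
    (𝒮 : Finset (Finset (Fin n))) (w : Finset (Fin n) → ℝ)
    (hw : ∀ a ∈ G, ∀ S ∈ 𝒮, w (S.image a) = w S)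
    (R : Finset (Finset (Fin n)))
    (hrep : ∀ S ∈ 𝒮, ∃! r, r ∈ R ∧ ∃ a ∈ G, S.image a = r)
    (β γ : Fin p → ℝ) :
    ∑ S ∈ 𝒮, (w S : ℂ) * expectation (Zprod n S) (qaoaState n p f β γ) =
      ∑ r ∈ R,
        (((𝒮.filter fun S => ∃ a ∈ G, S.image a = r).card : ℕ) : ℂ) * (w r : ℂ) *
          expectation (Zprod n r) (qaoaState n p f β γ) := by
  rw [Finset.sum_eq_sum_card_filter_nsmul hrep]
  · simp only [nsmul_eq_mul, mul_assoc]
  · rintro S hS r - ⟨a, ha, rfl⟩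
    rw [hw a ha S hS, expectation_Zprod_image (qaoaState_permAct β γ (hsym a ha))]

/-- For a group `G` of symmetries of `f`, a `G`-closed family `𝒮` of
index sets with `G`-invariant weights, and a set `R` of orbit representatives,
the QAOA energy `∑_{S ∈ 𝒮} w S ⟨Z_S⟩` equals `∑_{r ∈ R} |orbit of r| * w r * ⟨Z_r⟩`. -/
theorem qaoa_energy_orbit_sum (n p : ℕ) (hn : 1 ≤ n) (hp : 1 ≤ p)
    (f : Bit n → ℝ) (G : Subgroup (Equiv.Perm (Fin n)))
    (hsym : ∀ a ∈ G, ∀ x : Bit n, f (permAct a x) = f x)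
    (𝒮 : Finset (Finset (Fin n))) (w : Finset (Fin n) → ℝ)
    (hclosed : ∀ a ∈ G, ∀ S ∈ 𝒮, S.image a ∈ 𝒮)
    (hw : ∀ a ∈ G, ∀ S ∈ 𝒮, w (S.image a) = w S)
    (R : Finset (Finset (Fin n))) (hR : R ⊆ 𝒮)
    (hrep : ∀ S ∈ 𝒮, ∃! r, r ∈ R ∧ ∃ a ∈ G, S.image a = r)
    (β γ : Fin p → ℝ) :
    ∑ S ∈ 𝒮, (w S : ℂ) * expectation (Zprod n S) (qaoaState n p f β γ) =
      ∑ r ∈ R,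
        (((𝒮.filter fun S => ∃ a ∈ G, S.image a = r).card : ℕ) : ℂ) * (w r : ℂ) *
          expectation (Zprod n r) (qaoaState n p f β γ) :=
  qaoa_energy_orbit_sum_general n p f G hsym 𝒮 w hw R hrep β γ

end QAOA
end

section
/- Let n ≥ 1, let f : (Fin n → Fin 2) → ℝ have a symmetry a (a permutation of Fin n with f(a·x) = f(x) for all bitstrings x), and let A be the permutation unitary induced by a. Then A commutes with both the phase operator and the mixing operator for all parameter values: [A, exp(-i γ H(f))] = 0 for all γ ∈ ℝ and [A, exp(-i β B)] = 0 for all β ∈ ℝ, where B = ∑_j X_j. -/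
open scoped Classical
open Matrix

namespace QAOA

/-! A permutation matrix `P_e` commutes with `M` exactly when `M` is invariant under relabelling
rows and columns by `e`. The cost Hamiltonian is invariant because `a` is a symmetry of `f`; the
mixing Hamiltonian because relabelling by `a·` turns `X_j` into `X_{a⁻¹ j}`, which only permutes
the summands of `B`. Commuting with a matrix passes to commuting with its exponential. -/

theorem commute_toMatrix_symm_toPEquiv_iff {m α : Type*} [Fintype m] [DecidableEq m] [Semiring α]
    (e : m ≃ m) (M : Matrix m m α) :
    Commute e.symm.toPEquiv.toMatrix M ↔ ∀ x y, M (e x) (e y) = M x y := by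
  rw [Commute, SemiconjBy, PEquiv.toMatrix_toPEquiv_mul, PEquiv.mul_toMatrix_toPEquiv,
    Equiv.symm_symm, ← Matrix.ext_iff]
  constructor
  · intro h x y
    simpa using (h (e x) y).symm
  · intro h x y
    simpa using (h (e.symm x) y).symm

section

variable {n : ℕ} (a : Equiv.Perm (Fin n))

lemma permAct_eq_arrowCongr : permAct a = a.arrowCongr (Equiv.refl (Fin 2)) := rfl

lemma permAct_injective : Function.Injective (permAct a) := by
  rw [permAct_eq_arrowCongr]
  exact Equiv.injective _

lemma permMat_eq_toMatrix_toPEquiv :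
    permMat a = (a.arrowCongr (Equiv.refl (Fin 2))).symm.toPEquiv.toMatrix := by
  ext x y
  simp only [permMat, of_apply, PEquiv.toMatrix_apply, Equiv.toPEquiv_apply, Option.mem_some_iff,
    Equiv.eq_symm_apply, permAct_eq_arrowCongr, eq_comm]
  -- the two `if`s differ only in their `Decidable` instances
  congr

theorem commute_permMat_iff (M : Matrix (Bit n) (Bit n) ℂ) :
    Commute (permMat a) M ↔ ∀ x y, M (permAct a x) (permAct a y) = M x y := by
  rw [permMat_eq_toMatrix_toPEquiv, commute_toMatrix_symm_toPEquiv_iff, permAct_eq_arrowCongr]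

lemma commute_permMat_costH (f : Bit n → ℝ) (hsym : ∀ x : Bit n, f (permAct a x) = f x) :
    Commute (permMat a) (costH n f) := by
  rw [commute_permMat_iff]
  intro x y
  simp [costH, Matrix.diagonal_apply, (permAct_injective a).eq_iff, hsym]

lemma flip_permAct (x : Bit n) (j : Fin n) :
    flip (permAct a x) j = permAct a (flip x (a⁻¹ j)) := by
  funext k
  by_cases h : k = j <;> simp [flip, permAct, Function.update, h]

lemma Xop_permAct_permAct (j : Fin n) (x y : Bit n) :
    Xop n j (permAct a x) (permAct a y) = Xop n (a⁻¹ j) x y := by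
  simp [Xop, flip_permAct, (permAct_injective a).eq_iff]

lemma commute_permMat_mixB : Commute (permMat a) (mixB n) := by
  rw [commute_permMat_iff]
  intro x y
  simp only [mixB, Matrix.sum_apply, Xop_permAct_permAct]
  exact Equiv.sum_comp a⁻¹ (fun j => Xop n j x y)

end

theorem permMat_commutes_with_qaoa_operators_general (n : ℕ)
    (f : Bit n → ℝ) (a : Equiv.Perm (Fin n))
    (hsym : ∀ x : Bit n, f (permAct a x) = f x) :
    (∀ γ : ℝ,
      permMat a * NormedSpace.exp ((-Complex.I * (γ : ℂ)) • costH n f) -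
        NormedSpace.exp ((-Complex.I * (γ : ℂ)) • costH n f) * permMat a = 0) ∧
    (∀ β : ℝ,
      permMat a * NormedSpace.exp ((-Complex.I * (β : ℂ)) • mixB n) -
        NormedSpace.exp ((-Complex.I * (β : ℂ)) • mixB n) * permMat a = 0) :=
  ⟨fun _ => sub_eq_zero.mpr ((commute_permMat_costH a f hsym).smul_right _).exp_right,
    fun _ => sub_eq_zero.mpr ((commute_permMat_mixB a).smul_right _).exp_right⟩

/-- If `a` is a symmetry of `f`, the induced permutation unitary `A`
commutes with the phase operator `exp(-i γ H(f))` and the mixing operator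
`exp(-i β B)` for all parameter values. -/
theorem permMat_commutes_with_qaoa_operators (n : ℕ) (hn : 1 ≤ n)
    (f : Bit n → ℝ) (a : Equiv.Perm (Fin n))
    (hsym : ∀ x : Bit n, f (permAct a x) = f x) :
    (∀ γ : ℝ,
      permMat a * NormedSpace.exp ((-Complex.I * (γ : ℂ)) • costH n f) -
        NormedSpace.exp ((-Complex.I * (γ : ℂ)) • costH n f) * permMat a = 0) ∧
    (∀ β : ℝ,
      permMat a * NormedSpace.exp ((-Complex.I * (β : ℂ)) • mixB n) -
        NormedSpace.exp ((-Complex.I * (β : ℂ)) • mixB n) * permMat a = 0) :=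
  permMat_commutes_with_qaoa_operators_general n f a hsym

end QAOA
end
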